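/- Existence and uniqueness of the endemic equilibrium (algebraic part): assume A is symmetric and irreducible, ν_S = ν_I = ν > 0, and α(B + V) > 0. Then there exists a unique vector I* ∈ ℝ^ℓ with 0 < I*_j < 1/ℓ for all j satisfying, for every j, λ_j (1 − ℓ I*_j) I*_j − γ_j I*_j + ν Σ_{k≠j} (a_{kj} I*_k − a_{jk} I*_j) = 0 (equivalently, (νD − 𝔸 + B) I* = ℓ · diag(I*) B I*). -/

import Mathlib

open Finset Filter Topology

/-- The connectivity matrix `A` is irreducible. -/
def IrreducibleMat (ℓ : ℕ) (A : Matrix (Fin ℓ) (Fin ℓ) ℝ) : Prop :=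
  ∀ j k : Fin ℓ, j ≠ k → ∃ s : ℕ, 2 ≤ s ∧ ∃ c : ℕ → Fin ℓ,
    c 0 = j ∧ c (s - 1) = k ∧ ∀ i, i < s - 1 → A (c i) (c (i + 1)) ≠ 0

/-!
With `M = B + V`, a symmetric matrix with nonnegative off-diagonal entries, the equilibrium
equations read `M x = ℓ B x²` (coordinatewise square). These are the critical points of the
potential `3 xᵀ M x − 2 ℓ ∑ λ_j x_j³`, and a maximiser `x` on the box `[0, 1/ℓ]^ℓ` solves them.
An eigenvalue of `M` with positive real part yields `w ≥ 0` with `wᵀ M w > 0`, so the maximum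
is positive and `x ≠ 0`; irreducibility spreads positivity to all coordinates, and the row sums
`λ_j − γ_j < λ_j` keep `x` off the faces `x_j = 1/ℓ`. For uniqueness of positive solutions `u`,
`v`, let `t = max_j u_j / v_j` be attained at `m`: since `u ≤ t v` with equality at `m`, the sign
pattern of `M` gives `ℓ λ_m t² v_m² = (M u)_m ≤ t (M v)_m = t ℓ λ_m v_m²`, so `t ≤ 1`.
-/

theorem Pi.add_single_mem_Icc {ι α : Type*} [DecidableEq ι] [AddZeroClass α] [Preorder α]
    {a b x : ι → α} (hx : x ∈ Set.Icc a b) {j : ι} {h : α} (ha : a j ≤ x j + h)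
    (hb : x j + h ≤ b j) : x + Pi.single j h ∈ Set.Icc a b := by
  constructor <;> intro i <;> rcases eq_or_ne i j with rfl | hij <;> simp [*, hx.1 i, hx.2 i]

namespace IrreducibleMat

variable {n : ℕ} {A : Matrix (Fin n) (Fin n) ℝ}

theorem mono (hA : IrreducibleMat n A) {B : Matrix (Fin n) (Fin n) ℝ}
    (hAB : ∀ p q, A p q ≠ 0 → B p q ≠ 0) : IrreducibleMat n B := fun j k hjk => by
  obtain ⟨s, hs, c, hc0, hcs, hc⟩ := hA j k hjk
  exact ⟨s, hs, c, hc0, hcs, fun i hi => hAB _ _ (hc i hi)⟩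

theorem induction (hA : IrreducibleMat n A) {P : Fin n → Prop}
    (step : ∀ p q, A p q ≠ 0 → P p → P q) {j : Fin n} (hj : P j) (k : Fin n) : P k := by
  rcases eq_or_ne j k with rfl | hjk
  · exact hj
  obtain ⟨s, -, c, rfl, rfl, hc⟩ := hA j k hjk
  suffices ∀ i ≤ s - 1, P (c i) from this _ le_rfl
  intro i hi
  induction i with
  | zero => exact hj
  | succ i ih => exact step _ _ (hc i (by omega)) (ih (by omega))

end IrreducibleMat

namespace Matrix

variable {ι : Type*} [Fintype ι]

def IsMetzler (M : Matrix ι ι ℝ) : Prop :=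
  ∀ i j, i ≠ j → 0 ≤ M i j

variable {M : Matrix ι ι ℝ}

theorem IsMetzler.mulVec_apply_le (hM : M.IsMetzler) {x y : ι → ℝ} (hxy : x ≤ y) {j : ι}
    (hj : x j = y j) : (M *ᵥ x) j ≤ (M *ᵥ y) j := by
  refine sum_le_sum fun i _ => ?_
  rcases eq_or_ne j i with rfl | hji
  · rw [hj]
  · exact mul_le_mul_of_nonneg_left (hxy i) (hM j i hji)

/-- Take `w = |v|` for an eigenvector `v`: `Re (v* M v) = Re δ ‖v‖²`, and the sign pattern of `M`
gives `Re (conj v_p M_pq v_q) ≤ M_pq |v_p| |v_q|` term by term. -/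
theorem IsMetzler.exists_nonneg_dotProduct_mulVec_pos [DecidableEq ι] (hM : M.IsMetzler)
    {δ : ℂ} (hδ : δ ∈ spectrum ℂ (M.map (Complex.ofReal ·))) (hδ_re : 0 < δ.re) :
    ∃ w : ι → ℝ, 0 ≤ w ∧ 0 < w ⬝ᵥ M *ᵥ w := by
  rw [← spectrum_toLin', ← Module.End.hasEigenvalue_iff_mem_spectrum] at hδ
  obtain ⟨v, hv⟩ := hδ.exists_hasEigenvector
  have hMv : M.map (Complex.ofReal ·) *ᵥ v = δ • v := by
    rw [← toLin'_apply]; exact hv.apply_eq_smul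
  obtain ⟨p₀, hp₀⟩ := Function.ne_iff.mp hv.2
  set w : ι → ℝ := fun i => ‖v i‖
  have hvv : star v ⬝ᵥ v = ((∑ p, w p ^ 2 : ℝ) : ℂ) := by
    simp [dotProduct, w, Complex.conj_mul']
  have hterm : ∀ p q, M p q * (star (v p) * v q).re ≤ M p q * (w p * w q) := by
    intro p q
    rcases eq_or_ne p q with rfl | hpq
    · simp [w, Complex.conj_mul', sq]
    · refine mul_le_mul_of_nonneg_left ?_ (hM p q hpq)
      exact (Complex.re_le_norm _).trans_eq (by simp [w])
  refine ⟨w, fun i => norm_nonneg _, ?_⟩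
  calc 0 < δ.re * ∑ p, w p ^ 2 :=
        mul_pos hδ_re <| sum_pos' (fun p _ => by positivity)
          ⟨p₀, mem_univ _, pow_pos (norm_pos_iff.mpr hp₀) 2⟩
    _ = (star v ⬝ᵥ (M.map (Complex.ofReal ·) *ᵥ v)).re := by
      rw [hMv, dotProduct_smul, smul_eq_mul, hvv, Complex.re_mul_ofReal]
    _ = ∑ p, ∑ q, M p q * (star (v p) * v q).re := by
      simp only [dotProduct, mulVec, map_apply, Complex.re_sum, mul_sum]
      exact sum_congr rfl fun p _ => sum_congr rfl fun q _ => by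
        rw [Pi.star_apply, mul_left_comm, Complex.re_ofReal_mul]
    _ ≤ ∑ p, ∑ q, M p q * (w p * w q) := sum_le_sum fun p _ => sum_le_sum fun q _ => hterm p q
    _ = w ⬝ᵥ M *ᵥ w := by
      simp only [dotProduct, mulVec, mul_sum]
      exact sum_congr rfl fun p _ => sum_congr rfl fun q _ => by ring

theorem IsMetzler.le_of_mulVec_eq_sq (hM : M.IsMetzler) {κ : ι → ℝ} (hκ : ∀ i, 0 < κ i)
    {u v : ι → ℝ} (hv : ∀ i, 0 < v i) (hu_eq : ∀ i, (M *ᵥ u) i = κ i * u i ^ 2)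
    (hv_eq : ∀ i, (M *ᵥ v) i = κ i * v i ^ 2) : u ≤ v := by
  intro j
  by_contra hj
  have : Nonempty ι := ⟨j⟩
  obtain ⟨m, hm⟩ := Finite.exists_max fun i => u i / v i
  set t := u m / v m
  have hut : u ≤ t • v := fun i => by simpa [div_le_iff₀ (hv i)] using hm i
  have hum : u m = (t • v) m := by simp [t, (hv m).ne']
  have ht : 1 < t := (one_lt_div (hv j)).mpr (not_le.mp hj) |>.trans_le (hm j)
  have key : κ m * (t * v m) ^ 2 ≤ t * (κ m * v m ^ 2) :=
    calc κ m * (t * v m) ^ 2 = (M *ᵥ u) m := by rw [hu_eq, hum, Pi.smul_apply, smul_eq_mul]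
      _ ≤ (M *ᵥ (t • v)) m := hM.mulVec_apply_le hut hum
      _ = t * (κ m * v m ^ 2) := by rw [mulVec_smul, Pi.smul_apply, hv_eq, smul_eq_mul]
  have hpos : 0 < κ m * v m ^ 2 := mul_pos (hκ m) (pow_pos (hv m) 2)
  nlinarith [mul_pos (mul_pos (zero_lt_one.trans ht) hpos) (sub_pos.mpr ht)]

theorem IsMetzler.pos_of_irreducibleMat {n : ℕ} {M : Matrix (Fin n) (Fin n) ℝ}
    (hM : M.IsMetzler) (hsymm : M.IsSymm) (hirr : IrreducibleMat n M) {x : Fin n → ℝ}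
    (hx : 0 ≤ x) (hzero : ∀ q, x q = 0 → (M *ᵥ x) q ≤ 0) {j : Fin n} (hj : 0 < x j)
    (k : Fin n) : 0 < x k := by
  refine hirr.induction (P := fun k => 0 < x k) (fun p q hpq hp => ?_) hj k
  by_contra hq
  have hxq : x q = 0 := le_antisymm (not_lt.mp hq) (hx q)
  have hqp : q ≠ p := by rintro rfl; linarith
  have hMqp : 0 < M q p := (hM q p hqp).lt_of_ne (by rw [hsymm.apply]; exact hpq.symm)
  have hterms : ∀ i ∈ univ, 0 ≤ M q i * x i := fun i _ => by
    rcases eq_or_ne q i with rfl | hqi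
    · simp [hxq]
    · exact mul_nonneg (hM q i hqi) (hx i)
  have : M q p * x p ≤ (M *ᵥ x) q := single_le_sum hterms (mem_univ p)
  linarith [hzero q hxq, mul_pos hMqp hp]

def potential (M : Matrix ι ι ℝ) (κ x : ι → ℝ) : ℝ :=
  3 * (x ⬝ᵥ M *ᵥ x) - 2 * ∑ i, κ i * x i ^ 3

variable {κ : ι → ℝ}

theorem continuous_potential : Continuous (potential M κ) := by
  unfold potential; fun_prop

theorem potential_smul (t : ℝ) (x : ι → ℝ) :
    potential M κ (t • x) = t ^ 2 * (3 * (x ⬝ᵥ M *ᵥ x) - 2 * t * ∑ i, κ i * x i ^ 3) := by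
  have hcube : ∑ i, κ i * (t • x) i ^ 3 = t ^ 3 * ∑ i, κ i * x i ^ 3 := by
    rw [mul_sum]
    exact sum_congr rfl fun i _ => by simp only [Pi.smul_apply, smul_eq_mul]; ring
  rw [potential, hcube, mulVec_smul, dotProduct_smul, smul_dotProduct, smul_eq_mul, smul_eq_mul]
  ring

theorem exists_mem_Icc_potential_pos {w : ι → ℝ} (hw0 : 0 ≤ w) (hw : 0 < w ⬝ᵥ M *ᵥ w)
    {r : ℝ} (hr : 0 < r) : ∃ y ∈ Set.Icc 0 fun _ => r, 0 < potential M κ y := by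
  have hbox : ∀ᶠ t in 𝓝[>] (0 : ℝ), t • w ≤ fun _ => r := by
    refine eventually_all.mpr fun i => ?_
    have : Tendsto (fun t : ℝ => t * w i) (𝓝[>] 0) (𝓝 0) := by
      simpa using ((continuous_mul_const (w i)).tendsto 0).mono_left nhdsWithin_le_nhds
    exact (this.eventually_lt_const hr).mono fun t ht => ht.le
  have hsmall : ∀ᶠ t in 𝓝[>] (0 : ℝ), 2 * t * ∑ i, κ i * w i ^ 3 < 3 * (w ⬝ᵥ M *ᵥ w) := by
    have : Tendsto (fun t : ℝ => 2 * t * ∑ i, κ i * w i ^ 3) (𝓝[>] 0) (𝓝 0) := by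
      have hcont : Continuous fun t : ℝ => 2 * t * ∑ i, κ i * w i ^ 3 := by fun_prop
      simpa using (hcont.tendsto 0).mono_left nhdsWithin_le_nhds
    exact this.eventually_lt_const (by positivity)
  obtain ⟨t, ht, htw, htQ⟩ := (eventually_mem_nhdsWithin.and (hbox.and hsmall)).exists
  refine ⟨t • w, ⟨smul_nonneg (le_of_lt ht) hw0, htw⟩, ?_⟩
  rw [potential_smul]
  exact mul_pos (pow_pos ht 2) (by linarith)

variable [DecidableEq ι]

theorem potential_add_single (hM : M.IsSymm) (x : ι → ℝ) (j : ι) (h : ℝ) :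
    potential M κ (x + Pi.single j h) = potential M κ x
      + h * (6 * ((M *ᵥ x) j - κ j * x j ^ 2)
        + h * (3 * M j j - 6 * κ j * x j - 2 * κ j * h)) := by
  have hquad : (x + Pi.single j h) ⬝ᵥ M *ᵥ (x + Pi.single j h)
      = x ⬝ᵥ M *ᵥ x + 2 * h * (M *ᵥ x) j + h * M j j * h := by
    have hsymm : x ⬝ᵥ M *ᵥ Pi.single j h = h * (M *ᵥ x) j := by
      rw [dotProduct_mulVec, dotProduct_single, ← mulVec_transpose, hM.eq, mul_comm]
    rw [mulVec_add, add_dotProduct, dotProduct_add, dotProduct_add, hsymm, single_dotProduct,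
      single_dotProduct, mulVec_single]
    simp only [Pi.smul_apply, col_apply, MulOpposite.smul_eq_mul_unop, MulOpposite.unop_op]
    ring
  have hcube : ∑ i, κ i * (x + Pi.single j h : ι → ℝ) i ^ 3
      = ∑ i, κ i * x i ^ 3 + κ j * ((x j + h) ^ 3 - x j ^ 3) := by
    rw [← sub_eq_iff_eq_add', ← sum_sub_distrib, sum_eq_single j]
    · simp only [Pi.add_apply, Pi.single_eq_same]; ring
    · intro i _ hij; simp [hij]
    · simp
  rw [potential, potential, hquad, hcube]
  ring

theorem mulVec_apply_le_of_isMaxOn_potential (hM : M.IsSymm) {s : Set (ι → ℝ)} {x : ι → ℝ}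
    (hx : IsMaxOn (potential M κ) s x) {j : ι}
    (hj : ∀ᶠ h in 𝓝[>] (0 : ℝ), x + Pi.single j h ∈ s) :
    (M *ᵥ x) j ≤ κ j * x j ^ 2 := by
  set slope : ℝ → ℝ := fun h =>
    6 * ((M *ᵥ x) j - κ j * x j ^ 2) + h * (3 * M j j - 6 * κ j * x j - 2 * κ j * h)
  have hlim : Tendsto slope (𝓝[>] 0) (𝓝 (slope 0)) :=
    ((by fun_prop : Continuous slope).tendsto 0).mono_left nhdsWithin_le_nhds
  have hslope : ∀ᶠ h in 𝓝[>] 0, slope h ≤ 0 := by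
    filter_upwards [hj, self_mem_nhdsWithin] with h hs (hpos : 0 < h)
    have hle : potential M κ (x + Pi.single j h) ≤ potential M κ x := hx hs
    rw [potential_add_single hM] at hle
    exact nonpos_of_mul_nonpos_right (by simp only [slope]; linarith) hpos
  have := le_of_tendsto hlim hslope
  simp only [slope, zero_mul, add_zero] at this
  linarith

theorem le_mulVec_apply_of_isMaxOn_potential (hM : M.IsSymm) {s : Set (ι → ℝ)} {x : ι → ℝ}
    (hx : IsMaxOn (potential M κ) s x) {j : ι}
    (hj : ∀ᶠ h in 𝓝[<] (0 : ℝ), x + Pi.single j h ∈ s) :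
    κ j * x j ^ 2 ≤ (M *ᵥ x) j := by
  set slope : ℝ → ℝ := fun h =>
    6 * ((M *ᵥ x) j - κ j * x j ^ 2) + h * (3 * M j j - 6 * κ j * x j - 2 * κ j * h)
  have hlim : Tendsto slope (𝓝[<] 0) (𝓝 (slope 0)) :=
    ((by fun_prop : Continuous slope).tendsto 0).mono_left nhdsWithin_le_nhds
  have hslope : ∀ᶠ h in 𝓝[<] 0, 0 ≤ slope h := by
    filter_upwards [hj, self_mem_nhdsWithin] with h hs (hneg : h < 0)
    have hle : potential M κ (x + Pi.single j h) ≤ potential M κ x := hx hs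
    rw [potential_add_single hM] at hle
    exact nonneg_of_mul_nonpos_right (by simp only [slope]; linarith) hneg
  have := ge_of_tendsto hlim hslope
  simp only [slope, zero_mul, add_zero] at this
  linarith

theorem exists_pos_mulVec_eq_sq {n : ℕ} {M : Matrix (Fin n) (Fin n) ℝ} (hM : M.IsMetzler)
    (hsymm : M.IsSymm) (hirr : IrreducibleMat n M) {κ : Fin n → ℝ} {r : ℝ} (hr : 0 < r)
    (hrow : ∀ j, (M *ᵥ fun _ => r) j < κ j * r ^ 2) {w : Fin n → ℝ} (hw0 : 0 ≤ w)
    (hw : 0 < w ⬝ᵥ M *ᵥ w) :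
    ∃ x : Fin n → ℝ, (∀ j, 0 < x j ∧ x j < r) ∧ ∀ j, (M *ᵥ x) j = κ j * x j ^ 2 := by
  obtain ⟨y, hy, hy_pos⟩ := exists_mem_Icc_potential_pos (κ := κ) hw0 hw hr
  obtain ⟨x, hx, hmax⟩ := isCompact_Icc.exists_isMaxOn ⟨y, hy⟩ continuous_potential.continuousOn
  have hx0 : ∀ j, 0 ≤ x j := hx.1
  have hxr : ∀ j, x j ≤ r := hx.2
  have hle : ∀ j, x j < r → (M *ᵥ x) j ≤ κ j * x j ^ 2 := fun j hj =>
    mulVec_apply_le_of_isMaxOn_potential hsymm hmax <| by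
      filter_upwards [Ioo_mem_nhdsGT (sub_pos.mpr hj)] with h ⟨h0, hr⟩
      exact Pi.add_single_mem_Icc hx (by linarith [hx0 j] : (0 : ℝ) ≤ x j + h) (by linarith)
  have hge : ∀ j, 0 < x j → κ j * x j ^ 2 ≤ (M *ᵥ x) j := fun j hj =>
    le_mulVec_apply_of_isMaxOn_potential hsymm hmax <| by
      filter_upwards [Ioo_mem_nhdsLT (neg_lt_zero.mpr hj)] with h ⟨h0, hr⟩
      exact Pi.add_single_mem_Icc hx (by linarith : (0 : ℝ) ≤ x j + h) (by linarith [hxr j])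
  obtain ⟨j, hj⟩ : ∃ j, 0 < x j := by
    by_contra! hx_nonpos
    have hx_eq : x = 0 := funext fun j => le_antisymm (hx_nonpos j) (hx0 j)
    have hyx : potential M κ y ≤ potential M κ 0 := hx_eq ▸ hmax hy
    linarith [show potential M κ 0 = 0 by simp [potential]]
  have hpos : ∀ k, 0 < x k := hM.pos_of_irreducibleMat hsymm hirr hx.1
    (fun q hq => by simpa [hq] using hle q (by rw [hq]; exact hr)) hj
  have hlt : ∀ k, x k < r := fun k => (hxr k).lt_of_ne fun hk => by
    have hsq := hge k (hpos k)
    rw [show x k = r from hk] at hsq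
    linarith [hM.mulVec_apply_le hx.2 hk, hrow k]
  exact ⟨x, fun k => ⟨hpos k, hlt k⟩, fun k => le_antisymm (hle k (hlt k)) (hge k (hpos k))⟩

end Matrix

section SIS

open Matrix

variable {ι : Type*} [Fintype ι] [DecidableEq ι] {lam gam : ι → ℝ} {ν : ℝ} {A : Matrix ι ι ℝ}

/-- The matrix `B + V = B + ν D − 𝔸`, written out entrywise. -/
def sisMatrix (lam gam : ι → ℝ) (ν : ℝ) (A : Matrix ι ι ℝ) : Matrix ι ι ℝ :=
  of fun j k => if j = k then lam j - gam j - ν * ∑ i ∈ univ.erase j, A j i else ν * A j k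

theorem sisMatrix_apply_of_ne {j k : ι} (hjk : j ≠ k) :
    sisMatrix lam gam ν A j k = ν * A j k := by
  simp [sisMatrix, hjk]

theorem sisMatrix_apply_self (j : ι) :
    sisMatrix lam gam ν A j j = lam j - gam j - ν * ∑ i ∈ univ.erase j, A j i := by
  simp [sisMatrix]

theorem diagonal_add_smul_sub_diagonal_eq_sisMatrix {D : Matrix ι ι ℝ}
    (hD : ∀ j k, D j k = if j = k then -∑ i ∈ univ.erase j, A j i else A j k) :
    diagonal lam + (ν • D - diagonal gam) = sisMatrix lam gam ν A := by
  ext j k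
  rcases eq_or_ne j k with rfl | hjk
  · simp only [hD, sisMatrix_apply_self, Matrix.add_apply, Matrix.sub_apply, Matrix.smul_apply,
      diagonal_apply_eq, if_true, smul_eq_mul]
    ring
  · simp [hD, hjk, sisMatrix_apply_of_ne hjk]

theorem isMetzler_sisMatrix (hν : 0 ≤ ν) (hA : ∀ j k, 0 ≤ A j k) :
    (sisMatrix lam gam ν A).IsMetzler := fun j k hjk => by
  rw [sisMatrix_apply_of_ne hjk]; exact mul_nonneg hν (hA j k)

theorem isSymm_sisMatrix (hA : A.IsSymm) : (sisMatrix lam gam ν A).IsSymm := by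
  ext j k
  rcases eq_or_ne j k with rfl | hjk
  · rfl
  · rw [transpose_apply, sisMatrix_apply_of_ne hjk, sisMatrix_apply_of_ne hjk.symm, hA.apply]

theorem irreducibleMat_sisMatrix {n : ℕ} {lam gam : Fin n → ℝ} {A : Matrix (Fin n) (Fin n) ℝ}
    (hν : ν ≠ 0) (hAdiag : ∀ j, A j j = 0) (hirr : IrreducibleMat n A) :
    IrreducibleMat n (sisMatrix lam gam ν A) :=
  hirr.mono fun p q hpq => by
    have hne : p ≠ q := by rintro rfl; exact hpq (hAdiag p)
    rw [sisMatrix_apply_of_ne hne]; exact mul_ne_zero hν hpq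

theorem sisMatrix_mulVec_apply (hA : A.IsSymm) (x : ι → ℝ) (j : ι) :
    (sisMatrix lam gam ν A *ᵥ x) j
      = (lam j - gam j) * x j + ν * ∑ k ∈ univ.erase j, (A k j * x k - A j k * x j) := by
  have hoff : ∑ k ∈ univ.erase j, sisMatrix lam gam ν A j k * x k
      = ν * ∑ k ∈ univ.erase j, A j k * x k := by
    rw [mul_sum]
    exact sum_congr rfl fun k hk => by
      rw [sisMatrix_apply_of_ne (ne_of_mem_erase hk).symm, mul_assoc]
  have hflux : ∑ k ∈ univ.erase j, (A k j * x k - A j k * x j)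
      = ∑ k ∈ univ.erase j, A j k * x k - (∑ k ∈ univ.erase j, A j k) * x j := by
    rw [sum_sub_distrib, sum_mul]
    exact congrArg₂ _ (sum_congr rfl fun k _ => by rw [hA.apply]) rfl
  rw [mulVec, dotProduct, ← add_sum_erase _ _ (mem_univ j), hoff, hflux, sisMatrix_apply_self]
  ring

theorem sisMatrix_mulVec_const (hA : A.IsSymm) (r : ℝ) (j : ι) :
    (sisMatrix lam gam ν A *ᵥ fun _ => r) j = (lam j - gam j) * r := by
  rw [sisMatrix_mulVec_apply hA, sum_eq_zero fun k _ => by rw [hA.apply, sub_self], mul_zero,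
    add_zero]

end SIS

theorem endemic_equilibrium_exists_unique_general
    (ℓ : ℕ)
    (lam gam : Fin ℓ → ℝ) (hlam : ∀ j, 0 < lam j) (hgam : ∀ j, 0 < gam j)
    (ν : ℝ) (hν : 0 < ν)
    (A : Matrix (Fin ℓ) (Fin ℓ) ℝ) (hA : ∀ j k, 0 ≤ A j k) (hAdiag : ∀ j, A j j = 0)
    (hsym : A.IsSymm) (hirr : IrreducibleMat ℓ A)
    (D : Matrix (Fin ℓ) (Fin ℓ) ℝ)
    (hD : ∀ j k, D j k = if j = k then -∑ i ∈ univ.erase j, A j i else A j k)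
    (V : Matrix (Fin ℓ) (Fin ℓ) ℝ)
    (hV : V = ν • D - Matrix.diagonal gam)
    (halpha : ∃ δ ∈ spectrum ℂ ((Matrix.diagonal lam + V).map (Complex.ofReal ·)),
      0 < δ.re) :
    ∃! Istar : Fin ℓ → ℝ,
      (∀ j, 0 < Istar j ∧ Istar j < (ℓ : ℝ)⁻¹) ∧
      ∀ j, lam j * (1 - (ℓ : ℝ) * Istar j) * Istar j - gam j * Istar j
        + ν * ∑ k ∈ univ.erase j, (A k j * Istar k - A j k * Istar j) = 0 := by
  obtain ⟨δ, hδ, hδ_re⟩ := halpha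
  rw [hV, diagonal_add_smul_sub_diagonal_eq_sisMatrix hD] at hδ
  set M := sisMatrix lam gam ν A
  have hM : M.IsMetzler := isMetzler_sisMatrix hν.le hA
  obtain ⟨w, hw0, hw⟩ := hM.exists_nonneg_dotProduct_mulVec_pos hδ hδ_re
  have hℓ : (0 : ℝ) < ℓ := by
    rcases Nat.eq_zero_or_pos ℓ with rfl | hℓ
    · simp [dotProduct] at hw
    · exact_mod_cast hℓ
  have hequation : ∀ (x : Fin ℓ → ℝ) j, lam j * (1 - (ℓ : ℝ) * x j) * x j - gam j * x j
      + ν * ∑ k ∈ univ.erase j, (A k j * x k - A j k * x j) = M.mulVec x j - ℓ * lam j * x j ^ 2 :=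
    fun x j => by rw [sisMatrix_mulVec_apply hsym]; ring
  simp only [hequation, sub_eq_zero]
  have hrow : ∀ j, M.mulVec (fun _ => (ℓ : ℝ)⁻¹) j < ℓ * lam j * (ℓ : ℝ)⁻¹ ^ 2 := fun j => by
    rw [sisMatrix_mulVec_const hsym]
    field_simp
    linarith [hgam j]
  obtain ⟨x, hx_box, hx⟩ := Matrix.exists_pos_mulVec_eq_sq hM (isSymm_sisMatrix hsym)
    (irreducibleMat_sisMatrix hν.ne' hAdiag hirr) (inv_pos.mpr hℓ) hrow hw0 hw
  have hκ : ∀ j, 0 < ℓ * lam j := fun j => mul_pos hℓ (hlam j)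
  refine ⟨x, ⟨hx_box, hx⟩, fun y ⟨hy_box, hy⟩ => le_antisymm ?_ ?_⟩
  · exact hM.le_of_mulVec_eq_sq hκ (fun j => (hx_box j).1) hy hx
  · exact hM.le_of_mulVec_eq_sq hκ (fun j => (hy_box j).1) hx hy

/-- Existence and uniqueness of the endemic equilibrium (algebraic part): if `A` is
symmetric and irreducible, `ν > 0` and the stability modulus of `B + V` is positive
(i.e. `B + V` has an eigenvalue with positive real part), then there is a unique vector
`I*` with `0 < I*_j < 1/ℓ` for all `j` satisfying
`λ_j (1 − ℓ I*_j) I*_j − γ_j I*_j + ν Σ_{k≠j} (a_{kj} I*_k − a_{jk} I*_j) = 0` for all `j`. -/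
theorem endemic_equilibrium_exists_unique
    (ℓ : ℕ) (hℓ : 1 ≤ ℓ)
    (lam gam : Fin ℓ → ℝ) (hlam : ∀ j, 0 < lam j) (hgam : ∀ j, 0 < gam j)
    (ν : ℝ) (hν : 0 < ν)
    (A : Matrix (Fin ℓ) (Fin ℓ) ℝ) (hA : ∀ j k, 0 ≤ A j k) (hAdiag : ∀ j, A j j = 0)
    (hsym : A.IsSymm) (hirr : IrreducibleMat ℓ A)
    (D : Matrix (Fin ℓ) (Fin ℓ) ℝ)
    (hD : ∀ j k, D j k = if j = k then -∑ i ∈ univ.erase j, A j i else A j k)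
    (V : Matrix (Fin ℓ) (Fin ℓ) ℝ)
    (hV : V = ν • D - Matrix.diagonal gam)
    (halpha : ∃ δ ∈ spectrum ℂ ((Matrix.diagonal lam + V).map (Complex.ofReal ·)),
      0 < δ.re) :
    ∃! Istar : Fin ℓ → ℝ,
      (∀ j, 0 < Istar j ∧ Istar j < (ℓ : ℝ)⁻¹) ∧
      ∀ j, lam j * (1 - (ℓ : ℝ) * Istar j) * Istar j - gam j * Istar j
        + ν * ∑ k ∈ univ.erase j, (A k j * Istar k - A j k * Istar j) = 0 :=
  endemic_equilibrium_exists_unique_general ℓ lam gam hlam hgam ν hν A hA hAdiag hsym hirr D hD V hV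
    halpha
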